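/- arXiv:2303.12602 — 3 statements merged into one kernel-verified Lean document; each statement's English description precedes it below -/
import Mathlib

section
/- Let v ∈ ℂ. There exist polynomials s1, s2 ∈ ℂ[X] of degree at most 1, not both zero, such that (s1(0), s2(0)) ∈ ℂ·(1,0), (s1(1), s2(1)) ∈ ℂ·(1,1), (s1(t), s2(t)) ∈ ℂ·(1,v), and (coefficient of X in s1, coefficient of X in s2) ∈ ℂ·(0,1), if and only if v = t. (Geometrically: there is an embedding of O(−1) into the trivial rank-two bundle on P¹ passing through the parabolic directions over 0, 1, t and ∞ exactly when t − v = 0.) -/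
noncomputable section

open Polynomial

def line (a b : ℂ) : Submodule ℂ (Fin 2 → ℂ) := Submodule.span ℂ {![a, b]}

lemma mem_line_iff (a b x y : ℂ) (h : a ≠ 0 ∨ b ≠ 0) :
    ![x, y] ∈ line a b ↔ x * b = y * a := by
  rw [line, Submodule.mem_span_singleton]
  constructor
  · rintro ⟨c, hc⟩
    have hx := congrFun hc 0
    have hy := congrFun hc 1
    simp [Matrix.cons_val_zero, Matrix.cons_val_one] at hx hy
    subst hx; subst hy; ring
  · intro hxy
    rcases h with ha | hb
    · refine ⟨x / a, ?_⟩
      funext i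
      fin_cases i <;> simp [Matrix.cons_val_zero, Matrix.cons_val_one] <;>
        field_simp <;> linear_combination hxy
    · refine ⟨y / b, ?_⟩
      funext i
      fin_cases i <;> simp [Matrix.cons_val_zero, Matrix.cons_val_one] <;>
        field_simp <;> linear_combination -hxy

/-- an embedding of O(-1) into O ⊕ O passes through the parabolic
directions over 0, 1, t and ∞ iff v = t. -/
theorem stmt6 (lm tm : ℂ) (hl0 : lm ≠ 0) (hl1 : lm ≠ 1) (ht0 : tm ≠ 0) (ht1 : tm ≠ 1)
    (hlt : lm ≠ tm) (v : ℂ) :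
    (∃ s1 s2 : Polynomial ℂ, s1.degree ≤ 1 ∧ s2.degree ≤ 1 ∧ ¬(s1 = 0 ∧ s2 = 0) ∧
      ![s1.eval 0, s2.eval 0] ∈ line 1 0 ∧
      ![s1.eval 1, s2.eval 1] ∈ line 1 1 ∧
      ![s1.eval tm, s2.eval tm] ∈ line 1 v ∧
      ![s1.coeff 1, s2.coeff 1] ∈ line 0 1) ↔ v = tm := by
  constructor
  · rintro ⟨s1, s2, hd1, hd2, hne, h0, h1, ht, hinf⟩
    have e1 := Polynomial.eq_X_add_C_of_degree_le_one hd1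
    have e2 := Polynomial.eq_X_add_C_of_degree_le_one hd2
    set a1 := s1.coeff 1 with ha1
    set a0 := s1.coeff 0 with ha0
    set b1 := s2.coeff 1 with hb1
    set b0 := s2.coeff 0 with hb0
    rw [mem_line_iff _ _ _ _ (Or.inl one_ne_zero)] at h0 h1 ht
    rw [mem_line_iff _ _ _ _ (Or.inr one_ne_zero)] at hinf
    rw [e1, e2] at h0 h1 ht
    simp only [Polynomial.eval_add, Polynomial.eval_mul, Polynomial.eval_C,
      Polynomial.eval_X, mul_one, mul_zero, zero_mul, one_mul] at h0 h1 ht hinf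
    -- hinf : a1 = 0, h0 : b0 = 0
    have ha1z : a1 = 0 := by linear_combination hinf
    have hb0z : b0 = 0 := by linear_combination -h0
    have hab : a0 = b1 := by
      have := h1
      rw [ha1z, hb0z] at this
      linear_combination this
    have ha0ne : a0 ≠ 0 := by
      intro hz
      apply hne
      constructor
      · rw [e1, ha1z, hz]; simp
      · rw [e2, hb0z, ← hab, hz]; simp
    rw [ha1z, hb0z, ← hab] at ht
    -- ht : (a1*tm + a0) * v = (b1*tm + b0) * 1 → (a0) * v = a0 * tm
    field_simp at ht
    rcases (show v = tm ∨ a0 = 0 from by rcases mul_eq_zero.mp (show (v - tm) * a0 = 0 by linear_combination ht) with h | h; exacts [Or.inl (sub_eq_zero.mp h), Or.inr h]) with ht | ht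
    · exact ht
    · exact absurd ht ha0ne
  · rintro rfl
    refine ⟨1, Polynomial.X, ?_, ?_, ?_, ?_, ?_, ?_, ?_⟩
    · simpa using Polynomial.degree_one_le.trans (by norm_num)
    · simp [Polynomial.degree_X]
    · simp [Polynomial.X_ne_zero]
    · rw [mem_line_iff _ _ _ _ (Or.inl one_ne_zero)]; simp
    · rw [mem_line_iff _ _ _ _ (Or.inl one_ne_zero)]; simp
    · rw [mem_line_iff _ _ _ _ (Or.inl one_ne_zero)]; simp [mul_comm]
    · rw [mem_line_iff _ _ _ _ (Or.inr one_ne_zero)]; simp [Polynomial.coeff_one]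
end
end

section
/- Let l_0 = l_1 = l_λ = ℂ·(1,0) and l_t = l_∞ = ℂ·(0,1) (the decomposable parabolic bundle with three directions in the first factor and two in the second). A rational Higgs field θ = ((α, β), (γ, −α)) is a parabolic Higgs field for these directions if and only if α = 0, γ = c/(X−t) for some c ∈ ℂ, and β = (b0 + b1·X)/(X·(X−1)·(X−λ)) for some b0, b1 ∈ ℂ. In particular, the set of parabolic Higgs fields for these directions is a ℂ-vector space of dimension 3. -/
noncomputable section

open Polynomial

abbrev K : Type := RatFunc ℂ

def Xr : K := RatFunc.X

def Cc (a : ℂ) : K := RatFunc.C a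

/-- q = X(X-1)(X-λ)(X-t) -/
def q (lm tm : ℂ) : Polynomial ℂ :=
  Polynomial.X * (Polynomial.X - Polynomial.C 1) * (Polynomial.X - Polynomial.C lm) *
    (Polynomial.X - Polynomial.C tm)

def toK : Polynomial ℂ →+* K := algebraMap (Polynomial ℂ) K

def IsReg (lm tm : ℂ) (r : K) : Prop :=
  ∃ p : Polynomial ℂ, p.degree ≤ 3 ∧ toK (q lm tm) * r = toK p

def higgsMat (a b c : K) : Matrix (Fin 2) (Fin 2) K := !![a, b; c, -a]

def IsRatHiggs (lm tm : ℂ) (a b c : K) : Prop :=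
  IsReg lm tm a ∧ IsReg lm tm b ∧ IsReg lm tm c

def evalAt (p : ℂ) (r : K) : ℂ := RatFunc.eval (RingHom.id ℂ) p r

def resFin (p : ℂ) (M : Matrix (Fin 2) (Fin 2) K) : Matrix (Fin 2) (Fin 2) ℂ :=
  Matrix.of fun i j => evalAt p ((Xr - Cc p) * M i j)

def coeff3 (lm tm : ℂ) (r : K) : ℂ := ((toK (q lm tm) * r).num).coeff 3

def resInf (lm tm : ℂ) (M : Matrix (Fin 2) (Fin 2) K) : Matrix (Fin 2) (Fin 2) ℂ :=
  -(Matrix.of fun i j => coeff3 lm tm (M i j))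

def NilOn (R : Matrix (Fin 2) (Fin 2) ℂ) (L : Submodule ℂ (Fin 2 → ℂ)) : Prop :=
  (∀ v ∈ L, R.mulVec v = 0) ∧ (∀ v, R.mulVec v ∈ L)

def IsParabolic (lm tm : ℂ) (M : Matrix (Fin 2) (Fin 2) K)
    (l0 l1 ll lt li : Submodule ℂ (Fin 2 → ℂ)) : Prop :=
  NilOn (resFin 0 M) l0 ∧ NilOn (resFin 1 M) l1 ∧ NilOn (resFin lm M) ll ∧
  NilOn (resFin tm M) lt ∧ NilOn (resInf lm tm M) li

/-- a/(X - p) -/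
def frac (a p : ℂ) : K := Cc a / (Xr - Cc p)

def α1 (lm u : ℂ) : K := frac u lm - frac u 1
def β1 (lm u : ℂ) : K := frac u 1 - frac 1 lm + frac (1 - u) 0
def γ1 (lm u : ℂ) : K := frac (u ^ 2) lm - frac u 1
def θ1 (lm u : ℂ) : Matrix (Fin 2) (Fin 2) K := higgsMat (α1 lm u) (β1 lm u) (γ1 lm u)

def α2 (tm v : ℂ) : K := frac v tm - frac v 1
def β2 (tm v : ℂ) : K := frac v 1 - frac 1 tm + frac (1 - v) 0
def γ2 (tm v : ℂ) : K := frac (v ^ 2) tm - frac v 1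
def θ2 (tm v : ℂ) : Matrix (Fin 2) (Fin 2) K := higgsMat (α2 tm v) (β2 tm v) (γ2 tm v)

-- ============ auxiliary lemmas ============

lemma toK_inj : Function.Injective toK := IsFractionRing.injective _ _

lemma toK_ne_zero {P : Polynomial ℂ} (h : P ≠ 0) : toK P ≠ 0 := by
  simpa using fun hh => h (toK_inj (by simpa using hh))

lemma toK_eq_zero {P : Polynomial ℂ} (h : toK P = 0) : P = 0 :=
  toK_inj (by simpa using h)

lemma toK_X : toK Polynomial.X = Xr := RatFunc.algebraMap_X
lemma toK_C (a : ℂ) : toK (Polynomial.C a) = Cc a := RatFunc.algebraMap_C a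

lemma evalAt_div (P D : Polynomial ℂ) (p : ℂ) (hD : D.eval p ≠ 0) :
    evalAt p (toK P / toK D) = P.eval p / D.eval p := by
  have hD0 : D ≠ 0 := fun h => hD (by simp [h])
  set r : K := toK P / toK D with hr
  have hden : r.denom ∣ D := RatFunc.denom_div_dvd P D
  obtain ⟨s, hs⟩ := hden
  have hdenp : (r.denom).eval p ≠ 0 := by
    intro h0
    apply hD; rw [hs]; simp [h0]
  have hcross : P * r.denom = r.num * D := by
    apply toK_inj
    have h1 : toK r.num / toK r.denom = toK P / toK D := by
      rw [hr]; exact RatFunc.num_div_denom _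
    have h2 := (div_eq_div_iff
      (toK_ne_zero r.denom_ne_zero) (toK_ne_zero hD0)).mp h1
    simpa [map_mul, mul_comm] using h2.symm
  have hev := congrArg (Polynomial.eval p) hcross
  simp only [Polynomial.eval_mul] at hev
  have h3 : evalAt p r = (r.num).eval p / (r.denom).eval p := rfl
  rw [h3, div_eq_div_iff hdenp hD]
  linear_combination -hev

lemma q_ne_zero (lm tm : ℂ) : q lm tm ≠ 0 := by
  unfold q
  apply mul_ne_zero
  apply mul_ne_zero
  apply mul_ne_zero
  · exact Polynomial.X_ne_zero
  all_goals exact Polynomial.X_sub_C_ne_zero _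

/-- from IsReg equation, evaluate the residue at a root p of q with cofactor qp -/
lemma res_eval {lm tm : ℂ} {r : K} {P : Polynomial ℂ} (p : ℂ) (qp : Polynomial ℂ)
    (hfac : q lm tm = (Polynomial.X - Polynomial.C p) * qp) (hqp : qp.eval p ≠ 0)
    (hP : toK (q lm tm) * r = toK P) :
    evalAt p ((Xr - Cc p) * r) = P.eval p / qp.eval p := by
  have hq0 : toK (q lm tm) ≠ 0 := toK_ne_zero (q_ne_zero lm tm)
  have hr : r = toK P / toK (q lm tm) := by
    field_simp [hq0]
    linear_combination hP
  have hx : (Xr - Cc p) * r = toK P / toK qp := by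
    have hqp0 : toK qp ≠ 0 := toK_ne_zero (fun h => hqp (by simp [h]))
    have hxp0 : toK (Polynomial.X - Polynomial.C p) ≠ 0 :=
      toK_ne_zero (Polynomial.X_sub_C_ne_zero p)
    rw [hr, hfac]
    rw [map_mul, map_sub, toK_X, toK_C] at *
    field_simp
  rw [hx, evalAt_div _ _ _ hqp]

lemma coeff3_eq {lm tm : ℂ} {r : K} {P : Polynomial ℂ}
    (hP : toK (q lm tm) * r = toK P) : coeff3 lm tm r = P.coeff 3 := by
  unfold coeff3
  rw [hP]
  rw [show toK P = algebraMap (Polynomial ℂ) K P from rfl, RatFunc.num_algebraMap]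

-- NilOn characterizations
lemma mem_line_iff_s10 {a b : ℂ} (v : Fin 2 → ℂ) :
    v ∈ line a b ↔ ∃ k : ℂ, v = k • ![a, b] := by
  simp [line, Submodule.mem_span_singleton, eq_comm]

lemma nilOn_line10_iff (R : Matrix (Fin 2) (Fin 2) ℂ) :
    NilOn R (line 1 0) ↔ R 0 0 = 0 ∧ R 1 0 = 0 ∧ R 1 1 = 0 := by
  constructor
  · rintro ⟨h1, h2⟩
    have e1 := h1 ![1, 0] ((mem_line_iff_s10 _).mpr ⟨1, by simp⟩)
    have e10 := congrFun e1 0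
    have e11 := congrFun e1 1
    obtain ⟨k, hk⟩ := (mem_line_iff_s10 _).mp (h2 ![0, 1])
    have e21 := congrFun hk 1
    simp [Matrix.mulVec, Fin.sum_univ_two] at e10 e11 e21
    exact ⟨e10, e11, e21⟩
  · rintro ⟨h00, h10, h11⟩
    constructor
    · intro v hv
      obtain ⟨k, hk⟩ := (mem_line_iff_s10 _).mp hv
      subst hk
      funext i
      fin_cases i <;> simp [Matrix.mulVec, Fin.sum_univ_two, Matrix.vecHead, Matrix.vecTail, h00, h10, h11]
    · intro v
      rw [mem_line_iff_s10]
      refine ⟨R 0 1 * v 1, ?_⟩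
      funext i
      fin_cases i <;> simp [Matrix.mulVec, Fin.sum_univ_two, h00, h10, h11] <;> ring

lemma nilOn_line01_iff (R : Matrix (Fin 2) (Fin 2) ℂ) :
    NilOn R (line 0 1) ↔ R 0 0 = 0 ∧ R 0 1 = 0 ∧ R 1 1 = 0 := by
  constructor
  · rintro ⟨h1, h2⟩
    have e1 := h1 ![0, 1] ((mem_line_iff_s10 _).mpr ⟨1, by simp⟩)
    have e10 := congrFun e1 0
    have e11 := congrFun e1 1
    obtain ⟨k, hk⟩ := (mem_line_iff_s10 _).mp (h2 ![1, 0])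
    have e20 := congrFun hk 0
    simp [Matrix.mulVec, Fin.sum_univ_two] at e10 e11 e20
    exact ⟨e20, e10, e11⟩
  · rintro ⟨h00, h01, h11⟩
    constructor
    · intro v hv
      obtain ⟨k, hk⟩ := (mem_line_iff_s10 _).mp hv
      subst hk
      funext i
      fin_cases i <;> simp [Matrix.mulVec, Fin.sum_univ_two, Matrix.vecHead, Matrix.vecTail, h00, h01, h11]
    · intro v
      rw [mem_line_iff_s10]
      refine ⟨R 1 0 * v 0, ?_⟩
      funext i
      fin_cases i <;> simp [Matrix.mulVec, Fin.sum_univ_two, h00, h01, h11] <;> ring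
-- polynomial structure lemmas
lemma coprime_lin {a b : ℂ} (h : a ≠ b) :
    IsCoprime (Polynomial.X - Polynomial.C a) (Polynomial.X - Polynomial.C b) :=
  Polynomial.isCoprime_X_sub_C_of_isUnit_sub (sub_ne_zero_of_ne h).isUnit

lemma dvd_of_root {P : Polynomial ℂ} {a : ℂ} (h : P.eval a = 0) :
    (Polynomial.X - Polynomial.C a) ∣ P :=
  (Polynomial.dvd_iff_isRoot).mpr h

lemma cubic_dvd {P : Polynomial ℂ} {lm : ℂ} (hl0 : lm ≠ 0) (hl1 : lm ≠ 1)
    (h0 : P.eval 0 = 0) (h1 : P.eval 1 = 0) (hlm : P.eval lm = 0) :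
    (Polynomial.X * (Polynomial.X - Polynomial.C 1) * (Polynomial.X - Polynomial.C lm)) ∣ P := by
  have d0 : (Polynomial.X - Polynomial.C (0:ℂ)) ∣ P := dvd_of_root h0
  have d1 : (Polynomial.X - Polynomial.C (1:ℂ)) ∣ P := dvd_of_root h1
  have dl : (Polynomial.X - Polynomial.C lm) ∣ P := dvd_of_root hlm
  have c01 : IsCoprime (Polynomial.X - Polynomial.C (0:ℂ)) (Polynomial.X - Polynomial.C (1:ℂ)) :=
    coprime_lin (by norm_num)
  have d01 := c01.mul_dvd d0 d1
  have c2 : IsCoprime ((Polynomial.X - Polynomial.C (0:ℂ)) * (Polynomial.X - Polynomial.C 1))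
      (Polynomial.X - Polynomial.C lm) :=
    IsCoprime.mul_left (coprime_lin hl0.symm) (coprime_lin hl1.symm)
  have := c2.mul_dvd d01 dl
  simpa [mul_assoc] using this

lemma a_zero {P : Polynomial ℂ} {lm tm : ℂ} (hl0 : lm ≠ 0) (hl1 : lm ≠ 1)
    (ht0 : tm ≠ 0) (ht1 : tm ≠ 1) (hlt : lm ≠ tm)
    (hdeg : P.degree ≤ 3)
    (h0 : P.eval 0 = 0) (h1 : P.eval 1 = 0) (hlm : P.eval lm = 0) (htm : P.eval tm = 0) :
    P = 0 := by
  have d3 := cubic_dvd hl0 hl1 h0 h1 hlm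
  have dt : (Polynomial.X - Polynomial.C tm) ∣ P := dvd_of_root htm
  have c : IsCoprime (Polynomial.X * (Polynomial.X - Polynomial.C 1) *
      (Polynomial.X - Polynomial.C lm)) (Polynomial.X - Polynomial.C tm) :=
    IsCoprime.mul_left (IsCoprime.mul_left
      (by simpa using coprime_lin ht0.symm) (coprime_lin ht1.symm)) (coprime_lin hlt)
  have hq : (q lm tm) ∣ P := by
    have := c.mul_dvd d3 dt
    simpa [q] using this
  by_contra hP
  have hd := Polynomial.degree_le_of_dvd hq hP
  have : (q lm tm).degree = 4 := by
    unfold q; compute_degree!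
  rw [this] at hd
  have := hd.trans hdeg
  norm_num at this

lemma c_form {P : Polynomial ℂ} {lm : ℂ} (hl0 : lm ≠ 0) (hl1 : lm ≠ 1)
    (hdeg : P.degree ≤ 3)
    (h0 : P.eval 0 = 0) (h1 : P.eval 1 = 0) (hlm : P.eval lm = 0) :
    ∃ c0 : ℂ, P = Polynomial.C c0 *
      (Polynomial.X * (Polynomial.X - Polynomial.C 1) * (Polynomial.X - Polynomial.C lm)) := by
  obtain ⟨R, hR⟩ := cubic_dvd hl0 hl1 h0 h1 hlm
  by_cases hP : P = 0
  · exact ⟨0, by simp [hP]⟩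
  have hR0 : R ≠ 0 := fun h => hP (by simp [hR, h])
  have hd3 : (Polynomial.X * (Polynomial.X - Polynomial.C (1:ℂ)) *
      (Polynomial.X - Polynomial.C lm)).natDegree = 3 := by
    compute_degree!
  have hnd : P.natDegree ≤ 3 := Polynomial.natDegree_le_iff_degree_le.mpr hdeg
  have : P.natDegree = 3 + R.natDegree := by
    have hnz : (Polynomial.X * (Polynomial.X - Polynomial.C (1:ℂ)) *
        (Polynomial.X - Polynomial.C lm)) ≠ 0 :=
      mul_ne_zero (mul_ne_zero Polynomial.X_ne_zero (Polynomial.X_sub_C_ne_zero 1))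
        (Polynomial.X_sub_C_ne_zero lm)
    rw [hR, Polynomial.natDegree_mul hnz hR0, hd3]
  have hRdeg : R.natDegree = 0 := by omega
  obtain ⟨c0, rfl⟩ := Polynomial.natDegree_eq_zero.mp hRdeg
  exact ⟨c0, by rw [hR]; ring⟩

lemma b_form {P : Polynomial ℂ} {tm : ℂ}
    (hdeg : P.degree ≤ 3) (hc3 : P.coeff 3 = 0) (htm : P.eval tm = 0) :
    ∃ b0 b1 : ℂ, P = (Polynomial.C b0 + Polynomial.C b1 * Polynomial.X) *
      (Polynomial.X - Polynomial.C tm) := by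
  have hdeg2 : P.degree ≤ 2 := by
    refine (Polynomial.degree_le_iff_coeff_zero _ _).mpr fun m hm => ?_
    have hm3 : 3 ≤ m := by exact_mod_cast Nat.lt_iff_add_one_le.mp (by exact_mod_cast hm)
    rcases eq_or_lt_of_le hm3 with h | h
    · rw [← h]; exact hc3
    · exact Polynomial.coeff_eq_zero_of_degree_lt
        (lt_of_le_of_lt hdeg (by exact_mod_cast h))
  obtain ⟨R, hR⟩ := dvd_of_root htm
  have hRdeg : R.degree ≤ 1 := by
    by_cases hR0 : R = 0
    · simp [hR0]
    have hnd2 : P.natDegree ≤ 2 := Polynomial.natDegree_le_iff_degree_le.mpr hdeg2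
    have hx : P.natDegree = 1 + R.natDegree := by
      rw [hR, Polynomial.natDegree_mul (Polynomial.X_sub_C_ne_zero tm) hR0,
        Polynomial.natDegree_X_sub_C]
    have : R.natDegree ≤ 1 := by omega
    exact Polynomial.natDegree_le_iff_degree_le.mp this
  have hRe := Polynomial.eq_X_add_C_of_degree_le_one hRdeg
  refine ⟨R.coeff 0, R.coeff 1, ?_⟩
  rw [hR]
  conv_lhs => rw [hRe]
  ring
-- K-level helpers
lemma reg_eq {lm tm : ℂ} {r : K} {P : Polynomial ℂ} (hP : toK (q lm tm) * r = toK P) :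
    r = toK P / toK (q lm tm) := by
  have hq0 : toK (q lm tm) ≠ 0 := toK_ne_zero (q_ne_zero lm tm)
  field_simp [hq0]
  linear_combination hP

lemma div_q_eq {lm tm : ℂ} {P N D : Polynomial ℂ} (hD : D ≠ 0)
    (h : P * D = N * q lm tm) : toK P / toK (q lm tm) = toK N / toK D := by
  rw [div_eq_div_iff (toK_ne_zero (q_ne_zero lm tm)) (toK_ne_zero hD), ← map_mul, ← map_mul]
  exact congrArg toK h

lemma toK_div_eq {lm tm : ℂ} {N D P : Polynomial ℂ} (hD : D ≠ 0)
    (h : q lm tm * N = P * D) : toK (q lm tm) * (toK N / toK D) = toK P := by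
  have hD0 : toK D ≠ 0 := toK_ne_zero hD
  field_simp
  rw [← map_mul, ← map_mul]
  exact congrArg toK (h.trans (mul_comm P D))

/-- the cubic X(X-1)(X-λ) -/
def dB (lm : ℂ) : Polynomial ℂ :=
  Polynomial.X * (Polynomial.X - Polynomial.C 1) * (Polynomial.X - Polynomial.C lm)

lemma dB_ne_zero (lm : ℂ) : dB lm ≠ 0 :=
  mul_ne_zero (mul_ne_zero Polynomial.X_ne_zero (Polynomial.X_sub_C_ne_zero 1))
    (Polynomial.X_sub_C_ne_zero lm)

lemma kdB (lm : ℂ) : Xr * (Xr - 1) * (Xr - Cc lm) = toK (dB lm) := by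
  simp [dB, map_mul, map_sub, toK_X, toK_C, map_one]

lemma kLin (p : ℂ) : Xr - Cc p = toK (Polynomial.X - Polynomial.C p) := by
  simp [map_sub, toK_X, toK_C]

lemma kNum (b0 b1 : ℂ) : Cc b0 + Cc b1 * Xr = toK (Polynomial.C b0 + Polynomial.C b1 * Polynomial.X) := by
  simp [map_add, map_mul, toK_X, toK_C]

lemma evalAt_zero (p : ℂ) : evalAt p (0 : K) = 0 := by
  simp [evalAt]

lemma higgs00 (a b c : K) : higgsMat a b c 0 0 = a := rfl
lemma higgs01 (a b c : K) : higgsMat a b c 0 1 = b := rfl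
lemma higgs10 (a b c : K) : higgsMat a b c 1 0 = c := rfl
lemma higgs11 (a b c : K) : higgsMat a b c 1 1 = -a := rfl

lemma resFin_entry (p : ℂ) (M : Matrix (Fin 2) (Fin 2) K) (i j : Fin 2) :
    resFin p M i j = evalAt p ((Xr - Cc p) * M i j) := rfl

lemma resInf_entry (lm tm : ℂ) (M : Matrix (Fin 2) (Fin 2) K) (i j : Fin 2) :
    resInf lm tm M i j = -(coeff3 lm tm (M i j)) := rfl

-- factorizations of q
lemma qfac0 (lm tm : ℂ) : q lm tm = (Polynomial.X - Polynomial.C 0) *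
    ((Polynomial.X - Polynomial.C 1) * (Polynomial.X - Polynomial.C lm) *
      (Polynomial.X - Polynomial.C tm)) := by unfold q; simp only [map_zero, sub_zero]; ring
lemma qfac1 (lm tm : ℂ) : q lm tm = (Polynomial.X - Polynomial.C 1) *
    (Polynomial.X * (Polynomial.X - Polynomial.C lm) * (Polynomial.X - Polynomial.C tm)) := by
  unfold q; ring
lemma qfacl (lm tm : ℂ) : q lm tm = (Polynomial.X - Polynomial.C lm) *
    (Polynomial.X * (Polynomial.X - Polynomial.C 1) * (Polynomial.X - Polynomial.C tm)) := by
  unfold q; ring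
lemma qfact (lm tm : ℂ) : q lm tm = (Polynomial.X - Polynomial.C tm) * dB lm := by
  unfold q dB; ring
lemma evalAt_lin_div (p : ℂ) (N D : Polynomial ℂ) (hD : D.eval p ≠ 0) :
    evalAt p ((Xr - Cc p) * (toK N / toK D)) = 0 := by
  rw [kLin, mul_div_assoc', ← map_mul, evalAt_div _ _ _ hD]
  simp

lemma coeff3_zero (lm tm : ℂ) : coeff3 lm tm 0 = 0 := by
  simp [coeff3]

lemma part1 (lm tm : ℂ) (hl0 : lm ≠ 0) (hl1 : lm ≠ 1) (ht0 : tm ≠ 0) (ht1 : tm ≠ 1)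
    (hlt : lm ≠ tm) (a b c : K) (h : IsRatHiggs lm tm a b c) :
    IsParabolic lm tm (higgsMat a b c) (line 1 0) (line 1 0) (line 1 0) (line 0 1) (line 0 1) ↔
      (a = 0 ∧ (∃ c0 : ℂ, c = Cc c0 / (Xr - Cc tm)) ∧
        ∃ b0 b1 : ℂ, b = (Cc b0 + Cc b1 * Xr) / (Xr * (Xr - 1) * (Xr - Cc lm))) := by
  have n01 : (0:ℂ) ≠ 1 := by norm_num
  -- cofactor nonvanishing
  have h0ne : ((Polynomial.X - Polynomial.C 1) * (Polynomial.X - Polynomial.C lm) *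
      (Polynomial.X - Polynomial.C tm)).eval 0 ≠ 0 := by
    simp [sub_eq_zero, hl0, hl1, ht0, ht1, hlt, Ne.symm hl0, Ne.symm hl1, Ne.symm ht0, Ne.symm ht1, Ne.symm hlt]
  have h1ne : (Polynomial.X * (Polynomial.X - Polynomial.C lm) *
      (Polynomial.X - Polynomial.C tm)).eval 1 ≠ 0 := by
    simp [sub_eq_zero, hl0, hl1, ht0, ht1, hlt, Ne.symm hl0, Ne.symm hl1, Ne.symm ht0, Ne.symm ht1, Ne.symm hlt]
  have hlne : (Polynomial.X * (Polynomial.X - Polynomial.C 1) *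
      (Polynomial.X - Polynomial.C tm)).eval lm ≠ 0 := by
    simp [sub_eq_zero, hl0, hl1, ht0, ht1, hlt, Ne.symm hl0, Ne.symm hl1, Ne.symm ht0, Ne.symm ht1, Ne.symm hlt]
  have htne : (dB lm).eval tm ≠ 0 := by
    simp [dB, sub_eq_zero, hl0, hl1, ht0, ht1, hlt, Ne.symm hl0, Ne.symm hl1, Ne.symm ht0, Ne.symm ht1, Ne.symm hlt]
  obtain ⟨⟨Pa, hPadeg, hPa⟩, ⟨Pb, hPbdeg, hPb⟩, ⟨Pc, hPcdeg, hPc⟩⟩ := h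
  constructor
  · rintro ⟨H0, H1, Hl, Ht, Hi⟩
    rw [nilOn_line10_iff] at H0 H1 Hl
    rw [nilOn_line01_iff] at Ht Hi
    have ea0 : Pa.eval 0 = 0 := by
      have := H0.1
      rw [resFin_entry, higgs00, res_eval 0 _ (qfac0 lm tm) h0ne hPa] at this
      exact (div_eq_zero_iff.mp this).resolve_right h0ne
    have ea1 : Pa.eval 1 = 0 := by
      have := H1.1
      rw [resFin_entry, higgs00, res_eval 1 _ (qfac1 lm tm) h1ne hPa] at this
      exact (div_eq_zero_iff.mp this).resolve_right h1ne
    have eal : Pa.eval lm = 0 := by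
      have := Hl.1
      rw [resFin_entry, higgs00, res_eval lm _ (qfacl lm tm) hlne hPa] at this
      exact (div_eq_zero_iff.mp this).resolve_right hlne
    have eat : Pa.eval tm = 0 := by
      have := Ht.1
      rw [resFin_entry, higgs00, res_eval tm _ (qfact lm tm) htne hPa] at this
      exact (div_eq_zero_iff.mp this).resolve_right htne
    have ec0 : Pc.eval 0 = 0 := by
      have := H0.2.1
      rw [resFin_entry, higgs10, res_eval 0 _ (qfac0 lm tm) h0ne hPc] at this
      exact (div_eq_zero_iff.mp this).resolve_right h0ne
    have ec1 : Pc.eval 1 = 0 := by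
      have := H1.2.1
      rw [resFin_entry, higgs10, res_eval 1 _ (qfac1 lm tm) h1ne hPc] at this
      exact (div_eq_zero_iff.mp this).resolve_right h1ne
    have ecl : Pc.eval lm = 0 := by
      have := Hl.2.1
      rw [resFin_entry, higgs10, res_eval lm _ (qfacl lm tm) hlne hPc] at this
      exact (div_eq_zero_iff.mp this).resolve_right hlne
    have ebt : Pb.eval tm = 0 := by
      have := Ht.2.1
      rw [resFin_entry, higgs01, res_eval tm _ (qfact lm tm) htne hPb] at this
      exact (div_eq_zero_iff.mp this).resolve_right htne
    have ebc3 : Pb.coeff 3 = 0 := by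
      have := Hi.2.1
      rw [resInf_entry, higgs01, coeff3_eq hPb, neg_eq_zero] at this
      exact this
    have hPa0 : Pa = 0 := a_zero hl0 hl1 ht0 ht1 hlt hPadeg ea0 ea1 eal eat
    have ha : a = 0 := by
      rw [reg_eq hPa, hPa0]; simp
    obtain ⟨c0, hc0⟩ := c_form hl0 hl1 hPcdeg ec0 ec1 ecl
    obtain ⟨b0, b1, hb0⟩ := b_form hPbdeg ebc3 ebt
    refine ⟨ha, ⟨c0, ?_⟩, ⟨b0, b1, ?_⟩⟩
    · rw [reg_eq hPc, hc0, kLin, show Cc c0 = toK (Polynomial.C c0) from (toK_C c0).symm]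
      exact div_q_eq (lm := lm) (tm := tm) (Polynomial.X_sub_C_ne_zero tm) (by rw [qfact]; unfold dB; ring)
    · rw [reg_eq hPb, hb0, kNum, kdB]
      exact div_q_eq (lm := lm) (tm := tm) (dB_ne_zero lm) (by rw [qfact]; ring)
  · rintro ⟨rfl, ⟨c0, rfl⟩, ⟨b0, b1, rfl⟩⟩
    have hcK : Cc c0 / (Xr - Cc tm) = toK (Polynomial.C c0) / toK (Polynomial.X - Polynomial.C tm) := by
      rw [kLin, toK_C]
    have hbK : (Cc b0 + Cc b1 * Xr) / (Xr * (Xr - 1) * (Xr - Cc lm)) =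
        toK (Polynomial.C b0 + Polynomial.C b1 * Polynomial.X) / toK (dB lm) := by
      rw [kNum, kdB]
    have hqb : toK (q lm tm) *
        ((Cc b0 + Cc b1 * Xr) / (Xr * (Xr - 1) * (Xr - Cc lm))) =
        toK ((Polynomial.C b0 + Polynomial.C b1 * Polynomial.X) *
          (Polynomial.X - Polynomial.C tm)) := by
      rw [hbK]
      exact toK_div_eq (lm := lm) (tm := tm) (dB_ne_zero lm) (by rw [qfact]; ring)
    have hPbc3 : ((Polynomial.C b0 + Polynomial.C b1 * Polynomial.X) *
        (Polynomial.X - Polynomial.C tm)).coeff 3 = 0 := by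
      apply Polynomial.coeff_eq_zero_of_degree_lt
      apply lt_of_le_of_lt (show Polynomial.degree _ ≤ 2 by compute_degree)
      norm_num
    refine ⟨?_, ?_, ?_, ?_, ?_⟩
    · rw [nilOn_line10_iff]
      refine ⟨?_, ?_, ?_⟩
      · rw [resFin_entry, higgs00, mul_zero, evalAt_zero]
      · rw [resFin_entry, higgs10, hcK]
        exact evalAt_lin_div _ _ _ (by simp [sub_eq_zero, hl0, hl1, ht0, ht1, hlt, Ne.symm hl0, Ne.symm hl1, Ne.symm ht0, Ne.symm ht1, Ne.symm hlt])
      · rw [resFin_entry, higgs11, neg_zero, mul_zero, evalAt_zero]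
    · rw [nilOn_line10_iff]
      refine ⟨?_, ?_, ?_⟩
      · rw [resFin_entry, higgs00, mul_zero, evalAt_zero]
      · rw [resFin_entry, higgs10, hcK]
        exact evalAt_lin_div _ _ _ (by simp [sub_eq_zero, hl0, hl1, ht0, ht1, hlt, Ne.symm hl0, Ne.symm hl1, Ne.symm ht0, Ne.symm ht1, Ne.symm hlt])
      · rw [resFin_entry, higgs11, neg_zero, mul_zero, evalAt_zero]
    · rw [nilOn_line10_iff]
      refine ⟨?_, ?_, ?_⟩
      · rw [resFin_entry, higgs00, mul_zero, evalAt_zero]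
      · rw [resFin_entry, higgs10, hcK]
        exact evalAt_lin_div _ _ _ (by simp [sub_eq_zero, hl0, hl1, ht0, ht1, hlt, Ne.symm hl0, Ne.symm hl1, Ne.symm ht0, Ne.symm ht1, Ne.symm hlt])
      · rw [resFin_entry, higgs11, neg_zero, mul_zero, evalAt_zero]
    · rw [nilOn_line01_iff]
      refine ⟨?_, ?_, ?_⟩
      · rw [resFin_entry, higgs00, mul_zero, evalAt_zero]
      · rw [resFin_entry, higgs01, hbK]
        exact evalAt_lin_div _ _ _ htne
      · rw [resFin_entry, higgs11, neg_zero, mul_zero, evalAt_zero]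
    · rw [nilOn_line01_iff]
      refine ⟨?_, ?_, ?_⟩
      · rw [resInf_entry, higgs00, coeff3_zero, neg_zero]
      · rw [resInf_entry, higgs01, coeff3_eq hqb, hPbc3, neg_zero]
      · rw [resInf_entry, higgs11, neg_zero, coeff3_zero, neg_zero]
lemma higgs_congr {a b c a' b' c' : K} (ha : a = a') (hb : b = b') (hc : c = c') :
    higgsMat a b c = higgsMat a' b' c' := by rw [ha, hb, hc]

lemma smul_K (k : ℂ) (x : K) : k • x = Cc k * x := by
  rw [Algebra.smul_def, RatFunc.algebraMap_eq_C]; rfl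

lemma higgs_add (a b c a' b' c' : K) :
    higgsMat a b c + higgsMat a' b' c' = higgsMat (a + a') (b + b') (c + c') := by
  ext i j
  fin_cases i <;> fin_cases j <;> simp [higgsMat] <;> ring

lemma higgs_smul (k : ℂ) (a b c : K) :
    k • higgsMat a b c = higgsMat (k • a) (k • b) (k • c) := by
  ext i j
  fin_cases i <;> fin_cases j <;> simp [higgsMat]

def fmap (lm tm : ℂ) : (Fin 3 → ℂ) →ₗ[ℂ] Matrix (Fin 2) (Fin 2) K where
  toFun v := higgsMat 0 ((Cc (v 0) + Cc (v 1) * Xr) / (Xr * (Xr - 1) * (Xr - Cc lm)))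
    (Cc (v 2) / (Xr - Cc tm))
  map_add' u v := by
    rw [higgs_add]
    refine higgs_congr ?_ ?_ ?_
    · simp
    · rw [← add_div]
      congr 1
      simp only [Pi.add_apply, Cc, map_add]
      ring
    · rw [← add_div]
      congr 1
      simp only [Pi.add_apply, Cc, map_add]
  map_smul' k v := by
    rw [RingHom.id_apply, higgs_smul]
    refine higgs_congr ?_ ?_ ?_
    · simp
    · rw [smul_K, mul_div_assoc']
      congr 1
      simp only [Pi.smul_apply, Cc, smul_eq_mul, map_mul]
      ring
    · rw [smul_K, mul_div_assoc']
      congr 1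
      simp only [Pi.smul_apply, Cc, smul_eq_mul, map_mul]

lemma reg_zero (lm tm : ℂ) : IsReg lm tm 0 :=
  ⟨0, by simp, by simp⟩

lemma reg_b (lm tm b0 b1 : ℂ) :
    IsReg lm tm ((Cc b0 + Cc b1 * Xr) / (Xr * (Xr - 1) * (Xr - Cc lm))) := by
  refine ⟨(Polynomial.C b0 + Polynomial.C b1 * Polynomial.X) *
    (Polynomial.X - Polynomial.C tm), by compute_degree!, ?_⟩
  rw [kNum, kdB]
  exact toK_div_eq (lm := lm) (tm := tm) (dB_ne_zero lm) (by rw [qfact]; ring)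

lemma reg_c (lm tm c0 : ℂ) : IsReg lm tm (Cc c0 / (Xr - Cc tm)) := by
  refine ⟨Polynomial.C c0 * dB lm, by unfold dB; compute_degree!, ?_⟩
  rw [kLin, show Cc c0 = toK (Polynomial.C c0) from (toK_C c0).symm]
  exact toK_div_eq (lm := lm) (tm := tm) (Polynomial.X_sub_C_ne_zero tm)
    (by rw [qfact]; ring)

lemma fmap_inj (lm tm : ℂ) : Function.Injective (fmap lm tm) := by
  rw [injective_iff_map_eq_zero]
  intro v hv
  have hb : (Cc (v 0) + Cc (v 1) * Xr) / (Xr * (Xr - 1) * (Xr - Cc lm)) = 0 :=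
    congrFun (congrFun hv 0) 1
  have hc : Cc (v 2) / (Xr - Cc tm) = 0 := congrFun (congrFun hv 1) 0
  rw [kNum, kdB, _root_.div_eq_zero_iff] at hb
  rw [show Cc (v 2) = toK (Polynomial.C (v 2)) from (toK_C _).symm, kLin,
    _root_.div_eq_zero_iff] at hc
  have hbp : Polynomial.C (v 0) + Polynomial.C (v 1) * Polynomial.X = 0 := by
    rcases hb with h | h
    · exact toK_eq_zero h
    · exact absurd (toK_eq_zero h) (dB_ne_zero lm)
  have hcp : Polynomial.C (v 2) = 0 := by
    rcases hc with h | h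
    · exact toK_eq_zero h
    · exact absurd (toK_eq_zero h) (Polynomial.X_sub_C_ne_zero tm)
  have h0 : v 0 = 0 := by
    have := congrArg (fun P => Polynomial.coeff P 0) hbp
    simpa using this
  have h1 : v 1 = 0 := by
    have := congrArg (fun P => Polynomial.coeff P 1) hbp
    simpa using this
  have h2 : v 2 = 0 := by simpa using congrArg (fun P => Polynomial.coeff P 0) hcp
  funext i
  fin_cases i <;> assumption

/-- for the decomposable parabolic bundle with l₀ = l₁ = l_λ = ℂ(1,0) and
l_t = l_∞ = ℂ(0,1), the parabolic Higgs fields are exactly those with α = 0,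
γ = c/(X−t) and β = (b0 + b1·X)/(X(X−1)(X−λ)); they form a 3-dimensional ℂ-vector
space. -/
theorem stmt10 (lm tm : ℂ) (hl0 : lm ≠ 0) (hl1 : lm ≠ 1) (ht0 : tm ≠ 0) (ht1 : tm ≠ 1)
    (hlt : lm ≠ tm) :
    (∀ a b c : K, IsRatHiggs lm tm a b c →
      (IsParabolic lm tm (higgsMat a b c) (line 1 0) (line 1 0) (line 1 0) (line 0 1)
          (line 0 1) ↔
        (a = 0 ∧ (∃ c0 : ℂ, c = Cc c0 / (Xr - Cc tm)) ∧
          ∃ b0 b1 : ℂ, b = (Cc b0 + Cc b1 * Xr) / (Xr * (Xr - 1) * (Xr - Cc lm))))) ∧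
    ∃ W : Submodule ℂ (Matrix (Fin 2) (Fin 2) K),
      (W : Set (Matrix (Fin 2) (Fin 2) K)) =
        {M | (∃ a b c : K, M = higgsMat a b c ∧ IsRatHiggs lm tm a b c) ∧
          IsParabolic lm tm M (line 1 0) (line 1 0) (line 1 0) (line 0 1) (line 0 1)} ∧
      Module.finrank ℂ W = 3 := by
  refine ⟨fun a b c h => part1 lm tm hl0 hl1 ht0 ht1 hlt a b c h,
    LinearMap.range (fmap lm tm), ?_, ?_⟩
  · ext M
    simp only [SetLike.mem_coe, LinearMap.mem_range, Set.mem_setOf_eq]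
    constructor
    · rintro ⟨v, rfl⟩
      have hfv : (fmap lm tm) v =
          higgsMat 0 ((Cc (v 0) + Cc (v 1) * Xr) / (Xr * (Xr - 1) * (Xr - Cc lm)))
            (Cc (v 2) / (Xr - Cc tm)) := rfl
      have hreg : IsRatHiggs lm tm 0
          ((Cc (v 0) + Cc (v 1) * Xr) / (Xr * (Xr - 1) * (Xr - Cc lm)))
          (Cc (v 2) / (Xr - Cc tm)) :=
        ⟨reg_zero lm tm, reg_b lm tm (v 0) (v 1), reg_c lm tm (v 2)⟩
      refine ⟨⟨0, _, _, hfv, hreg⟩, ?_⟩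
      rw [hfv]
      exact (part1 lm tm hl0 hl1 ht0 ht1 hlt _ _ _ hreg).mpr
        ⟨rfl, ⟨v 2, rfl⟩, ⟨v 0, v 1, rfl⟩⟩
    · rintro ⟨⟨a, b, c, rfl, hreg⟩, hpar⟩
      obtain ⟨ha, ⟨c0, hc⟩, ⟨b0, b1, hb⟩⟩ :=
        (part1 lm tm hl0 hl1 ht0 ht1 hlt a b c hreg).mp hpar
      refine ⟨![b0, b1, c0], ?_⟩
      subst ha hc hb
      show higgsMat 0 _ _ = _
      simp
  · rw [LinearMap.finrank_range_of_inj (fmap_inj lm tm)]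
    simp
end
end

section
/- Let w ∈ ℂ and set l_0 = l_1 = l_λ = ℂ·(1,0), l_t = ℂ·(0,1), l_∞ = ℂ·(1,w). Then every parabolic Higgs field θ = ((α, β), (γ, −α)) for these directions satisfies α = 0 and γ = 0; in particular det θ = 0 and the constant line ℂ·(1,0) (which contains three of the five parabolic directions) is invariant under θ. (This is the concrete form of the step showing that if the fifth parabolic direction does not lie in the complementary factor, then no semistable Higgs field exists on the unstable bundle.) -/
noncomputable section

open Polynomial

lemma toK_ne_zero_s14 {p : Polynomial ℂ} (hp : p ≠ 0) : toK p ≠ 0 :=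
  RatFunc.algebraMap_ne_zero hp

lemma evalAt_spec (p d : Polynomial ℂ) (s : ℂ) (hd : d.eval s ≠ 0) (x : K)
    (hx : x * toK d = toK p) : evalAt s x = p.eval s / d.eval s := by
  have hd0 : d ≠ 0 := fun h => hd (by simp [h])
  have hx' : x = toK p / toK d := by
    rw [eq_div_iff (toK_ne_zero_s14 hd0)]; exact hx
  have hdvd : x.denom ∣ d := (RatFunc.denom_dvd hd0).mpr ⟨p, hx'⟩
  have hden : x.denom.eval s ≠ 0 := fun h =>
    hd (Polynomial.eval_eq_zero_of_dvd_of_eval_eq_zero hdvd h)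
  have hnum : toK x.num = x * toK x.denom := by
    have h := RatFunc.num_div_denom x
    rw [div_eq_iff (RatFunc.algebraMap_ne_zero (RatFunc.denom_ne_zero x))] at h
    exact h
  have hkey : x.num * d = p * x.denom := by
    apply toK_inj
    rw [map_mul, map_mul, hnum, ← hx]; ring
  have hkey' : x.num.eval s * d.eval s = p.eval s * x.denom.eval s := by
    have := congrArg (Polynomial.eval s) hkey
    simpa using this
  have heq : evalAt s x = x.num.eval s / x.denom.eval s := by
    simp [evalAt, RatFunc.eval]
  rw [heq, div_eq_div_iff hden hd]
  exact hkey'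

lemma res_root_zero (Q Qs p : Polynomial ℂ) (s : ℂ) (hfac : Q = (X - C s) * Qs)
    (hQs : Qs.eval s ≠ 0) (r : K) (hp : toK Q * r = toK p)
    (hres : evalAt s ((Xr - Cc s) * r) = 0) : p.eval s = 0 := by
  have hx : ((Xr - Cc s) * r) * toK Qs = toK p := by
    have h1 : toK Q = (Xr - Cc s) * toK Qs := by
      rw [hfac, map_mul, map_sub]
      simp [Xr, Cc, toK, RatFunc.algebraMap_X, RatFunc.algebraMap_C]
    rw [← hp, h1]; ring
  have h2 := evalAt_spec p Qs s hQs _ hx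
  rw [hres] at h2
  rcases div_eq_zero_iff.mp h2.symm with h | h
  · exact h
  · exact absurd h hQs

/-- if l₀ = l₁ = l_λ = ℂ(1,0), l_t = ℂ(0,1) and l_∞ = ℂ(1,w), then every
parabolic Higgs field is strictly upper triangular; in particular its determinant
vanishes and the line ℂ(1,0), containing three parabolic directions, is invariant. -/
theorem stmt14 (lm tm : ℂ) (hl0 : lm ≠ 0) (hl1 : lm ≠ 1) (ht0 : tm ≠ 0) (ht1 : tm ≠ 1)
    (hlt : lm ≠ tm) (w : ℂ) (a b c : K) (hH : IsRatHiggs lm tm a b c)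
    (hP : IsParabolic lm tm (higgsMat a b c) (line 1 0) (line 1 0) (line 1 0) (line 0 1)
      (line 1 w)) :
    a = 0 ∧ c = 0 ∧ Matrix.det (higgsMat a b c) = 0 ∧
      (higgsMat a b c).mulVec ![1, 0] ∈ Submodule.span K {![(1 : K), 0]} := by
  classical
  obtain ⟨⟨pa, hpad, hpa⟩, ⟨pb, hpbd, hpb⟩, ⟨pc, hpcd, hpc⟩⟩ := hH
  obtain ⟨h0, h1, hl, ht, hi⟩ := hP
  set M := higgsMat a b c with hM
  have hQne : q lm tm ≠ 0 := by
    unfold q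
    exact mul_ne_zero (mul_ne_zero (mul_ne_zero Polynomial.X_ne_zero
      (Polynomial.X_sub_C_ne_zero 1)) (Polynomial.X_sub_C_ne_zero lm))
      (Polynomial.X_sub_C_ne_zero tm)
  -- factorizations of q at each root
  have fac0 : q lm tm = (X - C 0) * ((X - C 1) * (X - C lm) * (X - C tm)) := by
    simp only [q, Polynomial.C_0, sub_zero]; ring
  have fac1 : q lm tm = (X - C 1) * (X * (X - C lm) * (X - C tm)) := by
    unfold q; ring
  have facl : q lm tm = (X - C lm) * (X * (X - C 1) * (X - C tm)) := by
    unfold q; ring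
  have fact' : q lm tm = (X - C tm) * (X * (X - C 1) * (X - C lm)) := by
    unfold q; ring
  have ev0 : ((X - C 1) * (X - C lm) * (X - C tm) : Polynomial ℂ).eval 0 ≠ 0 := by
    simp only [Polynomial.eval_mul, Polynomial.eval_sub, Polynomial.eval_X, Polynomial.eval_C]
    exact mul_ne_zero (mul_ne_zero (sub_ne_zero.mpr (by norm_num))
      (sub_ne_zero.mpr (Ne.symm hl0))) (sub_ne_zero.mpr (Ne.symm ht0))
  have ev1 : (X * (X - C lm) * (X - C tm) : Polynomial ℂ).eval 1 ≠ 0 := by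
    simp only [Polynomial.eval_mul, Polynomial.eval_sub, Polynomial.eval_X, Polynomial.eval_C]
    exact mul_ne_zero (mul_ne_zero one_ne_zero (sub_ne_zero.mpr (Ne.symm hl1)))
      (sub_ne_zero.mpr (Ne.symm ht1))
  have evl : (X * (X - C 1) * (X - C tm) : Polynomial ℂ).eval lm ≠ 0 := by
    simp only [Polynomial.eval_mul, Polynomial.eval_sub, Polynomial.eval_X, Polynomial.eval_C]
    exact mul_ne_zero (mul_ne_zero hl0 (sub_ne_zero.mpr hl1)) (sub_ne_zero.mpr hlt)
  have evt : (X * (X - C 1) * (X - C lm) : Polynomial ℂ).eval tm ≠ 0 := by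
    simp only [Polynomial.eval_mul, Polynomial.eval_sub, Polynomial.eval_X, Polynomial.eval_C]
    exact mul_ne_zero (mul_ne_zero ht0 (sub_ne_zero.mpr ht1))
      (sub_ne_zero.mpr (Ne.symm hlt))
  -- membership facts
  have mem10 : (![1, 0] : Fin 2 → ℂ) ∈ line 1 0 := Submodule.mem_span_singleton_self _
  have mem01 : (![0, 1] : Fin 2 → ℂ) ∈ line 0 1 := Submodule.mem_span_singleton_self _
  have mem1w : (![1, w] : Fin 2 → ℂ) ∈ line 1 w := Submodule.mem_span_singleton_self _
  -- residue conditions for a at 0, 1, lm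
  have ra0 : evalAt 0 ((Xr - Cc 0) * a) = 0 := by
    have := congrFun (h0.1 _ mem10) 0
    simpa [resFin, hM, higgsMat, Matrix.mulVec, dotProduct, Fin.sum_univ_two] using this
  have ra1 : evalAt 1 ((Xr - Cc 1) * a) = 0 := by
    have := congrFun (h1.1 _ mem10) 0
    simpa [resFin, hM, higgsMat, Matrix.mulVec, dotProduct, Fin.sum_univ_two] using this
  have ral : evalAt lm ((Xr - Cc lm) * a) = 0 := by
    have := congrFun (hl.1 _ mem10) 0
    simpa [resFin, hM, higgsMat, Matrix.mulVec, dotProduct, Fin.sum_univ_two] using this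
  -- residue of -a at tm
  have rat : evalAt tm ((Xr - Cc tm) * (-a)) = 0 := by
    have := congrFun (ht.1 _ mem01) 1
    simpa [resFin, hM, higgsMat, Matrix.mulVec, dotProduct, Fin.sum_univ_two] using this
  -- residue of c at 0, 1, lm
  have rc0 : evalAt 0 ((Xr - Cc 0) * c) = 0 := by
    have := congrFun (h0.1 _ mem10) 1
    simpa [resFin, hM, higgsMat, Matrix.mulVec, dotProduct, Fin.sum_univ_two] using this
  have rc1 : evalAt 1 ((Xr - Cc 1) * c) = 0 := by
    have := congrFun (h1.1 _ mem10) 1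
    simpa [resFin, hM, higgsMat, Matrix.mulVec, dotProduct, Fin.sum_univ_two] using this
  have rcl : evalAt lm ((Xr - Cc lm) * c) = 0 := by
    have := congrFun (hl.1 _ mem10) 1
    simpa [resFin, hM, higgsMat, Matrix.mulVec, dotProduct, Fin.sum_univ_two] using this
  -- pa vanishes at 0, 1, lm, tm
  have pa0 : pa.eval 0 = 0 := res_root_zero _ _ _ _ fac0 ev0 a hpa ra0
  have pa1 : pa.eval 1 = 0 := res_root_zero _ _ _ _ fac1 ev1 a hpa ra1
  have pal : pa.eval lm = 0 := res_root_zero _ _ _ _ facl evl a hpa ral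
  have pat : pa.eval tm = 0 := by
    have hneg : toK (q lm tm) * (-a) = toK (-pa) := by rw [map_neg, mul_neg, hpa]
    have := res_root_zero _ _ _ _ fact' evt (-a) hneg rat
    simpa using this
  -- pa = 0
  have hpa0 : pa = 0 := by
    apply Polynomial.eq_zero_of_natDegree_lt_card_of_eval_eq_zero' pa {0, 1, lm, tm}
    · intro i hi
      simp only [Finset.mem_insert, Finset.mem_singleton] at hi
      rcases hi with rfl | rfl | rfl | rfl <;> assumption
    · have hcard : ({0, 1, lm, tm} : Finset ℂ).card = 4 := by
        rw [Finset.card_insert_of_notMem (by simp [Ne.symm hl0, Ne.symm ht0]),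
          Finset.card_insert_of_notMem (by simp [Ne.symm hl1, Ne.symm ht1]),
          Finset.card_insert_of_notMem (by simp [hlt]), Finset.card_singleton]
      have hdeg : pa.natDegree ≤ 3 := Polynomial.natDegree_le_iff_degree_le.mpr hpad
      omega
  have ha : a = 0 := by
    have : toK (q lm tm) * a = 0 := by rw [hpa, hpa0, map_zero]
    rcases mul_eq_zero.mp this with h | h
    · exact absurd h (toK_ne_zero_s14 hQne)
    · exact h
  -- coefficient 3 of pc vanishes via residue at infinity
  have hc3 : pc.coeff 3 = 0 := by
    have hrc := congrFun (hi.1 _ mem1w) 1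
    have hca : coeff3 lm tm (M 1 1) = 0 := by
      have : M 1 1 = -a := rfl
      rw [this, ha, neg_zero]
      simp [coeff3, RatFunc.num_zero]
    have hM10 : M 1 0 = c := rfl
    simp only [resInf, Matrix.mulVec, dotProduct, Fin.sum_univ_two, Matrix.neg_apply,
      Matrix.of_apply, Pi.zero_apply, Matrix.cons_val_zero, Matrix.cons_val_one,
      Matrix.head_cons, hM10, hca] at hrc
    have hcc : coeff3 lm tm c = 0 := by
      have := hrc
      ring_nf at this ⊢
      linear_combination -this
    have : coeff3 lm tm c = pc.coeff 3 := by
      rw [coeff3, hpc]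
      rw [show toK pc = algebraMap (Polynomial ℂ) K pc from rfl, RatFunc.num_algebraMap]
    rw [← this]; exact hcc
  -- pc vanishes at 0, 1, lm
  have pc0 : pc.eval 0 = 0 := res_root_zero _ _ _ _ fac0 ev0 c hpc rc0
  have pc1 : pc.eval 1 = 0 := res_root_zero _ _ _ _ fac1 ev1 c hpc rc1
  have pcl : pc.eval lm = 0 := res_root_zero _ _ _ _ facl evl c hpc rcl
  have hpc0 : pc = 0 := by
    apply Polynomial.eq_zero_of_natDegree_lt_card_of_eval_eq_zero' pc {0, 1, lm}
    · intro i hi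
      simp only [Finset.mem_insert, Finset.mem_singleton] at hi
      rcases hi with rfl | rfl | rfl <;> assumption
    · have hcard : ({0, 1, lm} : Finset ℂ).card = 3 := by
        rw [Finset.card_insert_of_notMem (by simp [Ne.symm hl0]),
          Finset.card_insert_of_notMem (by simp [Ne.symm hl1]), Finset.card_singleton]
      have hdeg2 : pc.degree ≤ 2 := by
        rw [Polynomial.degree_le_iff_coeff_zero]
        intro m hm
        have hm2 : 2 < m := by exact_mod_cast hm
        rcases eq_or_lt_of_le (Nat.succ_le_of_lt hm2) with h3 | h4
        · rw [← h3]; exact hc3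
        · apply Polynomial.coeff_eq_zero_of_degree_lt
          exact lt_of_le_of_lt hpcd (by exact_mod_cast h4)
      have hdeg : pc.natDegree ≤ 2 := Polynomial.natDegree_le_iff_degree_le.mpr hdeg2
      omega
  have hc : c = 0 := by
    have : toK (q lm tm) * c = 0 := by rw [hpc, hpc0, map_zero]
    rcases mul_eq_zero.mp this with h | h
    · exact absurd h (toK_ne_zero_s14 hQne)
    · exact h
  subst ha; subst hc
  refine ⟨rfl, rfl, ?_, ?_⟩
  · rw [hM]
    simp [higgsMat, Matrix.det_fin_two_of]
  · have hz : (higgsMat (0 : K) b 0).mulVec ![1, 0] = 0 := by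
      funext i
      fin_cases i <;>
        simp [higgsMat, Matrix.mulVec, dotProduct, Fin.sum_univ_two]
    rw [hM, hz]
    exact Submodule.zero_mem _
end
end
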